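/- arXiv:1502.05107 — 9 statements merged into one kernel-verified Lean document; each statement's English description precedes it below -/
import Mathlib

section
/- Let f be a multivariate real polynomial in n variables with total degree d > 0 whose leading form f_d is positive definite, i.e. f_d(x) > 0 for every x ∈ ℝ^n with x ≠ 0. Then for every z ∈ ℝ the sublevel set {x ∈ ℝ^n : f(x) ≤ z} is compact. -/
open MvPolynomial

lemma eval_smul_of_isHomogeneous {n m : ℕ} {φ : MvPolynomial (Fin n) ℝ}
    (hφ : φ.IsHomogeneous m) (r : ℝ) (x : Fin n → ℝ) :
    eval (r • x) φ = r ^ m * eval x φ := by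
  rw [eval_eq, eval_eq, Finset.mul_sum]
  apply Finset.sum_congr rfl
  intro d hd
  have hdeg : ∑ i ∈ d.support, d i = m := by
    have := hφ (mem_support_iff.mp hd)
    simpa [Finsupp.weight_apply, Finsupp.sum] using this
  calc coeff d φ * ∏ i ∈ d.support, (r • x) i ^ d i
      = coeff d φ * ∏ i ∈ d.support, (r ^ d i * x i ^ d i) := by
        simp [Pi.smul_apply, smul_eq_mul, mul_pow]
    _ = coeff d φ * ((∏ i ∈ d.support, r ^ d i) * ∏ i ∈ d.support, x i ^ d i) := by
        rw [Finset.prod_mul_distrib]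
    _ = r ^ m * (coeff d φ * ∏ i ∈ d.support, x i ^ d i) := by
        rw [Finset.prod_pow_eq_pow_sum, hdeg]; ring

theorem sublevel_sets_compact_of_posdef_leading_form
    {n : ℕ} (f : MvPolynomial (Fin n) ℝ) (d : ℕ)
    (hd : d = f.totalDegree) (hd0 : 0 < d)
    (hpd : ∀ x : Fin n → ℝ, x ≠ 0 →
      0 < eval x (homogeneousComponent d f)) :
    ∀ z : ℝ, IsCompact {x : Fin n → ℝ | eval x f ≤ z} := by
  intro z
  rcases Nat.eq_zero_or_pos n with hn | hn
  · subst hn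
    exact (Set.toFinite _).isCompact
  haveI : Nonempty (Fin n) := ⟨⟨0, hn⟩⟩
  -- the sphere
  set S : Set (Fin n → ℝ) := Metric.sphere 0 1 with hS
  have hScpt : IsCompact S := isCompact_sphere 0 1
  have hSne : S.Nonempty := NormedSpace.sphere_nonempty.mpr zero_le_one
  -- the functions g j
  set g : ℕ → (Fin n → ℝ) → ℝ := fun j u => eval u (homogeneousComponent j f) with hg
  have hgc : ∀ j, Continuous (g j) := fun j => MvPolynomial.continuous_eval _
  -- minimum of g d on the sphere
  obtain ⟨u₀, hu₀S, hu₀min⟩ := hScpt.exists_isMinOn hSne ((hgc d).continuousOn)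
  set c : ℝ := g d u₀ with hc
  have hu₀ne : u₀ ≠ 0 := by
    intro h
    have : ‖u₀‖ = 1 := mem_sphere_zero_iff_norm.mp hu₀S
    simp [h] at this
  have hcpos : 0 < c := hpd u₀ hu₀ne
  -- bound for the lower order terms on the sphere
  obtain ⟨u₁, hu₁S, hu₁max⟩ := hScpt.exists_isMaxOn hSne
    (Continuous.continuousOn (by continuity : Continuous fun u => ∑ j ∈ Finset.range d, |g j u|))
  set M : ℝ := ∑ j ∈ Finset.range d, |g j u₁| with hM
  have hM0 : 0 ≤ M := Finset.sum_nonneg fun j _ => abs_nonneg _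
  have hMb : ∀ u ∈ S, ∀ j ∈ Finset.range d, |g j u| ≤ M := by
    intro u hu j hj
    calc |g j u| ≤ ∑ j ∈ Finset.range d, |g j u| :=
          Finset.single_le_sum (f := fun i => |g i u|) (fun i _ => abs_nonneg _) hj
      _ ≤ M := hu₁max hu
  -- choose the radius
  set R : ℝ := max 1 ((d * M + |z| + 1) / c) with hR
  have hR1 : 1 ≤ R := le_max_left _ _
  -- the sublevel set is contained in the closed ball of radius R
  have hsub : {x : Fin n → ℝ | eval x f ≤ z} ⊆ Metric.closedBall 0 R := by
    intro x hx
    rw [Metric.mem_closedBall, dist_zero_right]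
    by_contra hxR
    push_neg at hxR
    set r : ℝ := ‖x‖ with hr
    have hr1 : 1 < r := lt_of_le_of_lt hR1 hxR
    have hr0 : 0 < r := lt_trans one_pos hr1
    have hxne : x ≠ 0 := norm_pos_iff.mp hr0
    set u : Fin n → ℝ := r⁻¹ • x with hu
    have huS : u ∈ S := by
      rw [hS, mem_sphere_zero_iff_norm, hu, norm_smul]
      simp [abs_of_pos (inv_pos.mpr hr0), hr, inv_mul_cancel₀ (ne_of_gt hr0)]
      exact inv_mul_cancel₀ (ne_of_gt hr0)
    have hxu : x = r • u := by
      rw [hu, smul_smul, mul_inv_cancel₀ (ne_of_gt hr0), one_smul]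
    -- decompose f into homogeneous components
    have hfs : f = ∑ j ∈ Finset.range (d + 1), homogeneousComponent j f := by
      rw [hd]; exact (sum_homogeneousComponent f).symm
    have hsum : eval x f = ∑ j ∈ Finset.range (d + 1), r ^ j * g j u := by
      conv_lhs => rw [hfs]
      rw [map_sum]
      apply Finset.sum_congr rfl
      intro j _
      rw [hxu]
      exact eval_smul_of_isHomogeneous (homogeneousComponent_isHomogeneous j f) r u
    rw [Finset.sum_range_succ] at hsum
    -- bound lower order part
    have hlow : |∑ j ∈ Finset.range d, r ^ j * g j u| ≤ r ^ (d - 1) * (d * M) := by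
      calc |∑ j ∈ Finset.range d, r ^ j * g j u|
          ≤ ∑ j ∈ Finset.range d, |r ^ j * g j u| := Finset.abs_sum_le_sum_abs _ _
        _ ≤ ∑ j ∈ Finset.range d, r ^ (d - 1) * M := by
            apply Finset.sum_le_sum
            intro j hj
            rw [abs_mul, abs_pow, abs_of_pos hr0]
            have h1 : r ^ j ≤ r ^ (d - 1) :=
              pow_le_pow_right₀ (le_of_lt hr1) (Nat.le_sub_one_of_lt (Finset.mem_range.mp hj))
            exact mul_le_mul h1 (hMb u huS j hj) (abs_nonneg _)
              (pow_nonneg (le_of_lt hr0) _)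
        _ = r ^ (d - 1) * (d * M) := by
            rw [Finset.sum_const, Finset.card_range]; ring
    have hA : c ≤ g d u := hu₀min huS
    have h1 : r ^ d * c ≤ r ^ d * g d u :=
      mul_le_mul_of_nonneg_left hA (pow_nonneg (le_of_lt hr0) d)
    have h2 : -(r ^ (d - 1) * (d * M)) ≤ ∑ j ∈ Finset.range d, r ^ j * g j u :=
      (abs_le.mp hlow).1
    have hpow : r ^ d = r ^ (d - 1) * r := by
      conv_lhs => rw [← Nat.sub_add_cancel hd0]
      rw [pow_succ]
    have hpw1 : 1 ≤ r ^ (d - 1) := one_le_pow₀ (le_of_lt hr1)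
    have hRc : ↑d * M + |z| + 1 ≤ R * c :=
      (div_le_iff₀ hcpos).mp (le_max_right _ _)
    have hrc : R * c < r * c := mul_lt_mul_of_pos_right hxR hcpos
    have key : |z| + 1 ≤ r * c - ↑d * M := by linarith
    have final : r * c - ↑d * M ≤ r ^ (d - 1) * (r * c - ↑d * M) := by
      have h0 : 0 ≤ r * c - ↑d * M := by
        have := abs_nonneg z; linarith
      exact le_mul_of_one_le_left h0 hpw1
    have e1 : r ^ d * c = r ^ (d - 1) * (r * c) := by rw [hpow]; ring
    have e2 : r ^ (d - 1) * (r * c - ↑d * M)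
        = r ^ (d - 1) * (r * c) - r ^ (d - 1) * (↑d * M) := by ring
    have hz : z < eval x f := by
      have := le_abs_self z
      linarith
    exact absurd hx (not_le.mpr hz)
  exact Metric.isCompact_of_isClosed_isBounded
    (IsClosed.preimage (MvPolynomial.continuous_eval f) isClosed_Iic)
    (Metric.isBounded_closedBall.subset hsub)
end

section
/- Let f be a multivariate real polynomial in n variables with total degree d > 0 whose leading form f_d is positive definite, i.e. f_d(x) > 0 for every x ∈ ℝ^n with x ≠ 0. Then f attains its minimum over ℤ^n (there exists x* ∈ ℤ^n with f(x*) ≤ f(y) for all y ∈ ℤ^n) and f attains its minimum over ℝ^n (there exists x' ∈ ℝ^n with f(x') ≤ f(y) for all y ∈ ℝ^n). -/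
/-!
On the unit sphere the leading form `f_d` is bounded below by some `c > 0`, so by homogeneity
`f_d x ≥ c ‖x‖ ^ d`, while every lower component `f_j` is `O(‖x‖ ^ j) = o(‖x‖ ^ d)`. Hence
`f x → ∞` as `‖x‖ → ∞`, i.e. `f` is coercive on `ℝⁿ`, and it stays coercive when restricted to the
closed discrete subset `ℤⁿ`. A coercive continuous function on a proper space attains its minimum.
-/

open MvPolynomial Filter Asymptotics

theorem exists_pos_mul_norm_pow_le {E : Type*} [NormedAddCommGroup E] [NormedSpace ℝ E]
    [ProperSpace E] {F : E → ℝ} {m : ℕ} (hm : 0 < m) (hF : Continuous F)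
    (hhom : ∀ t : ℝ, 0 ≤ t → ∀ x, F (t • x) = t ^ m * F x) (hpos : ∀ x, x ≠ 0 → 0 < F x) :
    ∃ c > 0, ∀ x, c * ‖x‖ ^ m ≤ F x := by
  have hF0 : F 0 = 0 := by simpa [zero_pow hm.ne'] using hhom 0 le_rfl 0
  obtain ⟨c, hc, hsphere⟩ : ∃ c > 0, ∀ u ∈ Metric.sphere (0 : E) 1, c ≤ F u := by
    rcases (Metric.sphere (0 : E) 1).eq_empty_or_nonempty with h | h
    · exact ⟨1, one_pos, by simp [h]⟩
    · obtain ⟨u, hu, hmin⟩ := (isCompact_sphere 0 1).exists_isMinOn h hF.continuousOn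
      exact ⟨F u, hpos u (ne_zero_of_mem_unit_sphere ⟨u, hu⟩), hmin⟩
  refine ⟨c, hc, fun x => ?_⟩
  rcases eq_or_ne x 0 with rfl | hx
  · simp [hF0, zero_pow hm.ne']
  have hnx : ‖x‖ ≠ 0 := norm_ne_zero_iff.mpr hx
  have hu : ‖x‖⁻¹ • x ∈ Metric.sphere (0 : E) 1 := by
    simp [norm_smul, hnx]
  calc c * ‖x‖ ^ m ≤ ‖x‖ ^ m * F (‖x‖⁻¹ • x) := by
        rw [mul_comm]; exact mul_le_mul_of_nonneg_left (hsphere _ hu) (by positivity)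
    _ = F x := by rw [← hhom _ (norm_nonneg x), smul_inv_smul₀ hnx]

theorem tendsto_atTop_of_const_mul_add_isLittleO_le {α : Type*} {l : Filter α}
    {u v w : α → ℝ} {c : ℝ} (hc : 0 < c) (hv : Tendsto v l atTop) (hw : w =o[l] v)
    (hle : ∀ᶠ x in l, c * v x + w x ≤ u x) : Tendsto u l atTop := by
  refine tendsto_atTop_mono' l ?_ (hv.const_mul_atTop (half_pos hc))
  filter_upwards [hw.bound (half_pos hc), hv.eventually_ge_atTop 0, hle] with x hwx hvx hx
  rw [Real.norm_eq_abs, Real.norm_eq_abs, abs_of_nonneg hvx] at hwx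
  linarith [neg_abs_le (w x)]

namespace MvPolynomial

variable {σ : Type*}

theorem IsHomogeneous.eval_smul {φ : MvPolynomial σ ℝ} {m : ℕ} (hφ : φ.IsHomogeneous m)
    (t : ℝ) (x : σ → ℝ) : eval (t • x) φ = t ^ m * eval x φ := by
  rw [eval_eq, eval_eq, Finset.mul_sum]
  refine Finset.sum_congr rfl fun s hs => ?_
  simp only [Pi.smul_apply, smul_eq_mul, mul_pow, Finset.prod_mul_distrib,
    Finset.prod_pow_eq_pow_sum, ← hφ.degree_eq_sum_deg_support hs]
  ring

theorem IsHomogeneous.abs_eval_le [Fintype σ] {φ : MvPolynomial σ ℝ} {m : ℕ}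
    (hφ : φ.IsHomogeneous m) (x : σ → ℝ) :
    |eval x φ| ≤ (∑ s ∈ φ.support, |coeff s φ|) * ‖x‖ ^ m := by
  rw [eval_eq, Finset.sum_mul]
  refine (Finset.abs_sum_le_sum_abs _ _).trans (Finset.sum_le_sum fun s hs => ?_)
  rw [abs_mul, Finset.abs_prod, hφ.degree_eq_sum_deg_support hs, ← Finset.prod_pow_eq_pow_sum]
  gcongr with i
  rw [abs_pow, ← Real.norm_eq_abs]
  gcongr
  exact norm_le_pi_norm x i

theorem eval_eq_eval_homogeneousComponent_totalDegree_add (f : MvPolynomial σ ℝ) (x : σ → ℝ) :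
    eval x f = eval x (homogeneousComponent f.totalDegree f) +
      ∑ j ∈ Finset.range f.totalDegree, eval x (homogeneousComponent j f) := by
  conv_lhs => rw [← sum_homogeneousComponent f]
  rw [map_sum, Finset.sum_range_succ, add_comm]

theorem tendsto_eval_cocompact_atTop [Fintype σ] (f : MvPolynomial σ ℝ)
    (hdeg : 0 < f.totalDegree)
    (hpd : ∀ x : σ → ℝ, x ≠ 0 → 0 < eval x (homogeneousComponent f.totalDegree f)) :
    Tendsto (fun x => eval x f) (cocompact (σ → ℝ)) atTop := by
  obtain ⟨c, hc, hlead⟩ := exists_pos_mul_norm_pow_le hdeg (continuous_eval _)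
    (fun t _ x => (homogeneousComponent_isHomogeneous _ f).eval_smul t x) hpd
  have hnorm : Tendsto (‖·‖) (cocompact (σ → ℝ)) atTop := tendsto_norm_cocompact_atTop
  have hlower : (fun x => ∑ j ∈ Finset.range f.totalDegree, eval x (homogeneousComponent j f))
      =o[cocompact (σ → ℝ)] fun x => ‖x‖ ^ f.totalDegree := by
    refine IsLittleO.fun_sum fun j hj => ?_
    have hbig : (fun x => eval x (homogeneousComponent j f)) =O[cocompact (σ → ℝ)]
        fun x => ‖x‖ ^ j :=
      IsBigO.of_bound _ (Eventually.of_forall fun x => by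
        simpa [Real.norm_eq_abs] using (homogeneousComponent_isHomogeneous j f).abs_eval_le x)
    exact hbig.trans_isLittleO
      ((isLittleO_pow_pow_atTop_of_lt (Finset.mem_range.mp hj)).comp_tendsto hnorm)
  refine tendsto_atTop_of_const_mul_add_isLittleO_le hc
    ((tendsto_pow_atTop hdeg.ne').comp hnorm) hlower (Eventually.of_forall fun x => ?_)
  rw [eval_eq_eval_homogeneousComponent_totalDegree_add f x]
  simpa using hlead x

end MvPolynomial

theorem tendsto_intCast_pi_cofinite_cocompact (ι : Type*) [Finite ι] :
    Tendsto (fun (y : ι → ℤ) i => (y i : ℝ)) cofinite (cocompact (ι → ℝ)) := by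
  simpa only [coprodᵢ_cofinite, coprodᵢ_cocompact] using
    Tendsto.pi_map_coprodᵢ fun _ : ι => Int.tendsto_coe_cofinite

theorem exists_integer_and_continuous_minimizer_of_posdef_leading_form
    {n : ℕ} (f : MvPolynomial (Fin n) ℝ) (d : ℕ)
    (hd : d = f.totalDegree) (hd0 : 0 < d)
    (hpd : ∀ x : Fin n → ℝ, x ≠ 0 →
      0 < eval x (homogeneousComponent d f)) :
    (∃ x' : Fin n → ℤ, ∀ y : Fin n → ℤ,
      eval (fun i => (x' i : ℝ)) f ≤ eval (fun i => (y i : ℝ)) f) ∧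
    (∃ x'' : Fin n → ℝ, ∀ y : Fin n → ℝ, eval x'' f ≤ eval y f) := by
  subst hd
  have hcoercive := tendsto_eval_cocompact_atTop f hd0 hpd
  exact ⟨(hcoercive.comp (tendsto_intCast_pi_cofinite_cocompact (Fin n))).exists_forall_le,
    (continuous_eval f).exists_forall_le hcoercive⟩
end

section
/- Let f be a multivariate real polynomial in n variables with total degree d > 0, let p ≥ 1 be a real number, and let c_1, …, c_d ∈ ℝ be such that for every j ∈ {1, …, d} and every x ∈ ℝ^n with Σ_{i=1}^n |x_i|^p = 1 one has f_j(x) ≥ c_j, where c_d > 0. Let q : ℝ → ℝ be the univariate polynomial q(λ) = Σ_{j=1}^d c_j λ^j, and let R ≥ 0 satisfy q(R) = 0 and q(t) = 0 → t ≤ R for all t ≥ 0 (R is the largest nonnegative real root of q). Then: (i) for every x ∈ ℝ^n with (Σ_{i=1}^n |x_i|^p)^{1/p} > R one has f(x) > f(0); (ii) every x' ∈ ℝ^n with f(x') ≤ f(y) for all y ∈ ℝ^n satisfies (Σ_i |x'_i|^p)^{1/p} ≤ R; (iii) every x* ∈ ℤ^n with f(x*) ≤ f(y) for all y ∈ ℤ^n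 satisfies (Σ_i |x*_i|^p)^{1/p} ≤ R and moreover |x*_i| ≤ ⌊R⌋ for every i. -/
open MvPolynomial Finset Filter

/-! Writing `x = λ u` with `u` on the unit `p`-sphere, homogeneity gives `f_j(x) = λ^j f_j(u) ≥ c_j λ^j`,
so `f(x) ≥ f(0) + q(‖x‖_p)`. Since `c_d > 0`, `q` tends to `+∞`, so by the intermediate value
theorem it is positive beyond its largest nonnegative root `R`. Hence `f(x) > f(0)` once
`‖x‖_p > R`, so minimizers (real or integral) lie in the `p`-ball of radius `R`, and each coordinate
is bounded by the `p`-norm. -/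

theorem MvPolynomial.IsHomogeneous.eval_smul_s6 {σ R : Type*} [CommSemiring R]
    {φ : MvPolynomial σ R} {j : ℕ} (hφ : φ.IsHomogeneous j) (t : R) (x : σ → R) :
    eval (t • x) φ = t ^ j * eval x φ := by
  rw [eval_eq, eval_eq, Finset.mul_sum]
  refine Finset.sum_congr rfl fun m hm => ?_
  simp only [Pi.smul_apply, smul_eq_mul, mul_pow, Finset.prod_mul_distrib,
    Finset.prod_pow_eq_pow_sum, ← hφ.degree_eq_sum_deg_support hm]
  ring

theorem MvPolynomial.eval_eq_eval_zero_add_sum_homogeneousComponent {σ R : Type*}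
    [CommSemiring R] (f : MvPolynomial σ R) (x : σ → R) :
    eval x f = eval 0 f +
      ∑ j ∈ Icc 1 f.totalDegree, eval x (homogeneousComponent j f) := by
  have hzero : ∀ j ∈ Icc 1 f.totalDegree, eval 0 (homogeneousComponent j f) = 0 := by
    intro j hj
    have h := (homogeneousComponent_isHomogeneous j f).eval_smul_s6 0 x
    rwa [zero_smul, zero_pow (by grind), zero_mul] at h
  have hsplit : ∀ y : σ → R, eval y f =
      eval y (homogeneousComponent 0 f) +
        ∑ j ∈ Icc 1 f.totalDegree, eval y (homogeneousComponent j f) := by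
    intro y
    conv_lhs => rw [← sum_homogeneousComponent f]
    rw [map_sum, range_eq_Ico, Ico_add_one_right_eq_Icc, ← insert_Icc_add_one_left_eq_Icc (Nat.zero_le _),
      sum_insert (by simp), zero_add]
  rw [hsplit x, hsplit 0, sum_eq_zero hzero, add_zero, homogeneousComponent_zero, eval_C, eval_C]

theorem tendsto_sum_mul_pow_atTop {s : Finset ℕ} {c : ℕ → ℝ} {d : ℕ} (hd0 : 0 < d) (hds : d ∈ s)
    (hle : ∀ j ∈ s, j ≤ d) (hcd : 0 < c d) :
    Tendsto (fun t : ℝ => ∑ j ∈ s, c j * t ^ j) atTop atTop := by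
  set P : Polynomial ℝ := ∑ j ∈ s, Polynomial.C (c j) * Polynomial.X ^ j
  have hcoeff : P.coeff d = c d := by
    simp only [P, Polynomial.finsetSum_coeff, Polynomial.coeff_C_mul_X_pow,
      sum_ite_eq, if_pos hds]
  have hnat : P.natDegree = d :=
    Polynomial.natDegree_eq_of_le_of_coeff_ne_zero
      (Polynomial.natDegree_sum_le_of_forall_le _ _ fun j hj =>
        (Polynomial.natDegree_C_mul_X_pow_le _ _).trans (hle j hj))
      (hcoeff ▸ hcd.ne')
  have hdeg : 0 < P.degree := Polynomial.natDegree_pos_iff_degree_pos.mp (hnat ▸ hd0)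
  have hlead : P.leadingCoeff = c d := by rw [Polynomial.leadingCoeff, hnat, hcoeff]
  simpa [P, Polynomial.eval_finsetSum] using
    Polynomial.tendsto_atTop_of_leadingCoeff_nonneg P hdeg (hlead ▸ hcd.le)

theorem pos_of_tendsto_atTop_of_ne_zero {g : ℝ → ℝ} (hg : Continuous g)
    (htop : Tendsto g atTop atTop) {R : ℝ} (hzero : ∀ t, R < t → g t ≠ 0) {t : ℝ} (ht : R < t) :
    0 < g t := by
  by_contra! hneg
  obtain ⟨M, hM0, htM⟩ := ((htop.eventually_ge_atTop 0).and (eventually_ge_atTop t)).exists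
  obtain ⟨s, hs, hs0⟩ := intermediate_value_Icc htM hg.continuousOn ⟨hneg, hM0⟩
  exact hzero s (ht.trans_le hs.1) hs0

theorem abs_le_sum_abs_rpow_rpow_inv {ι : Type*} [Fintype ι] {p : ℝ} (hp : 0 < p)
    (x : ι → ℝ) (i : ι) : |x i| ≤ (∑ k, |x k| ^ p) ^ (1 / p) := by
  calc |x i| = (|x i| ^ p) ^ (1 / p) := by
        rw [← Real.rpow_mul (abs_nonneg _), mul_one_div_cancel hp.ne', Real.rpow_one]
    _ ≤ (∑ k, |x k| ^ p) ^ (1 / p) := by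
        gcongr
        exact single_le_sum (f := fun k => |x k| ^ p)
          (fun k _ => Real.rpow_nonneg (abs_nonneg _) p) (mem_univ i)

theorem sum_abs_inv_smul_rpow_eq_one {ι : Type*} [Fintype ι] {p : ℝ} (hp : 0 < p)
    (x : ι → ℝ) (hx : 0 < (∑ k, |x k| ^ p) ^ (1 / p)) :
    ∑ k, |(((∑ k, |x k| ^ p) ^ (1 / p))⁻¹ • x) k| ^ p = 1 := by
  set S := ∑ k, |x k| ^ p
  have hS0 : 0 ≤ S := sum_nonneg fun k _ => Real.rpow_nonneg (abs_nonneg _) p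
  have hpow : (S ^ (1 / p)) ^ p = S := by
    rw [← Real.rpow_mul hS0, one_div_mul_cancel hp.ne', Real.rpow_one]
  have hS : S ≠ 0 := by rintro h; simp [h, Real.zero_rpow (inv_pos.mpr hp).ne'] at hx
  simp only [Pi.smul_apply, smul_eq_mul, abs_mul, abs_inv, abs_of_pos hx]
  simp only [Real.mul_rpow (inv_nonneg.mpr hx.le) (abs_nonneg _), Real.inv_rpow hx.le, hpow,
    ← mul_sum, inv_mul_cancel₀ hS, S]

theorem eval_zero_add_sum_mul_pow_le_eval {σ : Type*} [Fintype σ] (f : MvPolynomial σ ℝ)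
    {p : ℝ} (hp : 0 < p) {c : ℕ → ℝ}
    (hc : ∀ j ∈ Icc 1 f.totalDegree, ∀ x : σ → ℝ,
      (∑ i, |x i| ^ p) = 1 → c j ≤ eval x (homogeneousComponent j f))
    (x : σ → ℝ) (hx : 0 < (∑ i, |x i| ^ p) ^ (1 / p)) :
    eval 0 f + ∑ j ∈ Icc 1 f.totalDegree, c j * ((∑ i, |x i| ^ p) ^ (1 / p)) ^ j ≤ eval x f := by
  set l := (∑ i, |x i| ^ p) ^ (1 / p)
  have hx_eq : x = l • l⁻¹ • x := by rw [smul_smul, mul_inv_cancel₀ hx.ne', one_smul]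
  rw [eval_eq_eval_zero_add_sum_homogeneousComponent f x]
  gcongr with j hj
  rw [hx_eq, (homogeneousComponent_isHomogeneous j f).eval_smul_s6, mul_comm]
  gcongr
  exact hc j hj _ (sum_abs_inv_smul_rpow_eq_one hp x hx)

theorem norm_bound_on_minimizers_general
    {n : ℕ} (f : MvPolynomial (Fin n) ℝ) (d : ℕ)
    (hd : d = f.totalDegree) (hd0 : 0 < d)
    (p : ℝ) (hp : 1 ≤ p) (c : ℕ → ℝ)
    (hc : ∀ j ∈ Finset.Icc 1 d, ∀ x : Fin n → ℝ,
      (∑ i, |x i| ^ p) = 1 → c j ≤ eval x (homogeneousComponent j f))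
    (hcd : 0 < c d)
    (R : ℝ) (hR0 : 0 ≤ R)
    (hRmax : ∀ t : ℝ, 0 ≤ t → (∑ j ∈ Finset.Icc 1 d, c j * t ^ j = 0) → t ≤ R) :
    (∀ x : Fin n → ℝ, (∑ i, |x i| ^ p) ^ (1 / p) > R →
      eval (0 : Fin n → ℝ) f < eval x f) ∧
    (∀ x' : Fin n → ℝ, (∀ y : Fin n → ℝ, eval x' f ≤ eval y f) →
      (∑ i, |x' i| ^ p) ^ (1 / p) ≤ R) ∧
    (∀ x' : Fin n → ℤ,
      (∀ y : Fin n → ℤ,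
        eval (fun i => (x' i : ℝ)) f ≤ eval (fun i => (y i : ℝ)) f) →
      (∑ i, |(x' i : ℝ)| ^ p) ^ (1 / p) ≤ R ∧ ∀ i, |x' i| ≤ ⌊R⌋) := by
  subst hd
  have hp0 : 0 < p := one_pos.trans_le hp
  have hq : ∀ t, R < t → 0 < ∑ j ∈ Icc 1 f.totalDegree, c j * t ^ j :=
    fun t ht => pos_of_tendsto_atTop_of_ne_zero (by fun_prop)
      (tendsto_sum_mul_pow_atTop hd0 (right_mem_Icc.mpr hd0) (fun j hj => (mem_Icc.mp hj).2) hcd)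
      (fun s hs h0 => (hRmax s (hR0.trans hs.le) h0).not_gt hs) ht
  have hgrowth : ∀ x : Fin n → ℝ, R < (∑ i, |x i| ^ p) ^ (1 / p) →
      eval (0 : Fin n → ℝ) f < eval x f := fun x hx =>
    (lt_add_of_pos_right _ (hq _ hx)).trans_le
      (eval_zero_add_sum_mul_pow_le_eval f hp0 hc x (hR0.trans_lt hx))
  have hbound : ∀ x : Fin n → ℝ, eval x f ≤ eval 0 f → (∑ i, |x i| ^ p) ^ (1 / p) ≤ R :=
    fun x h => le_of_not_gt fun hx => (hgrowth x hx).not_ge h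
  refine ⟨hgrowth, fun x' hmin => hbound x' (hmin 0), fun x' hmin => ?_⟩
  have hx' : (∑ i, |(x' i : ℝ)| ^ p) ^ (1 / p) ≤ R := hbound _ (by simpa using hmin 0)
  refine ⟨hx', fun i => Int.le_floor.mpr ?_⟩
  push_cast
  exact (abs_le_sum_abs_rpow_rpow_inv hp0 (fun k => (x' k : ℝ)) i).trans hx'

theorem norm_bound_on_minimizers
    {n : ℕ} (f : MvPolynomial (Fin n) ℝ) (d : ℕ)
    (hd : d = f.totalDegree) (hd0 : 0 < d)
    (p : ℝ) (hp : 1 ≤ p) (c : ℕ → ℝ)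
    (hc : ∀ j ∈ Finset.Icc 1 d, ∀ x : Fin n → ℝ,
      (∑ i, |x i| ^ p) = 1 → c j ≤ eval x (homogeneousComponent j f))
    (hcd : 0 < c d)
    (R : ℝ) (hR0 : 0 ≤ R)
    (hRroot : ∑ j ∈ Finset.Icc 1 d, c j * R ^ j = 0)
    (hRmax : ∀ t : ℝ, 0 ≤ t → (∑ j ∈ Finset.Icc 1 d, c j * t ^ j = 0) → t ≤ R) :
    (∀ x : Fin n → ℝ, (∑ i, |x i| ^ p) ^ (1 / p) > R →
      eval (0 : Fin n → ℝ) f < eval x f) ∧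
    (∀ x' : Fin n → ℝ, (∀ y : Fin n → ℝ, eval x' f ≤ eval y f) →
      (∑ i, |x' i| ^ p) ^ (1 / p) ≤ R) ∧
    (∀ x' : Fin n → ℤ,
      (∀ y : Fin n → ℤ,
        eval (fun i => (x' i : ℝ)) f ≤ eval (fun i => (y i : ℝ)) f) →
      (∑ i, |(x' i : ℝ)| ^ p) ^ (1 / p) ≤ R ∧ ∀ i, |x' i| ≤ ⌊R⌋) :=
  norm_bound_on_minimizers_general f d hd hd0 p hp c hc hcd R hR0 hRmax
end

section
/- Let f = Σ_α a_α X^α be a multivariate real polynomial in n variables with total degree d > 0, and let c_d > 0 be such that f_d(x) ≥ c_d for all x ∈ ℝ^n with Σ_{i=1}^n x_i^2 = 1. For j = 1, …, d−1 set c_j := −Σ_{|α| = j} |a_α| (the negated 1-norm of the degree-j homogeneous component). Let q(λ) = c_d λ^d + Σ_{j=1}^{d-1} c_j λ^j, let R ≥ 0 be the largest nonnegative real root of q (q(R) = 0 and every t ≥ 0 with q(t) = 0 satisfies t ≤ R), and let R_lit := max(1, (1/c_d) · Σ_{0 < |α| < d} |a_α|). Then R ≤ R_lit. If moreover d > 2,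 there is a coefficient a_α ≠ 0 with 0 < |α| < d−1, and R ≠ 1, then R < R_lit. -/
/-!
Writing `b j := ∑_{|α| = j} |a_α| ≥ 0`, a root `R` of `q` satisfies `c_d R^d = ∑_{0<j<d} b_j R^j`.
If `R > 1`, each `R^j` on the right is at most `R^(d-1)`, so `c_d R ≤ ∑_j b_j = ∑_{0<|α|<d} |a_α|`,
i.e. `R ≤ R_lit`. A nonzero coefficient in a degree `j < d - 1` makes the estimate
`R^j ≤ R^(d-1)` strict for that term, and hence the bound strict.
-/

open MvPolynomial Finset

section CauchyBound

variable {s : Finset ℕ} {b : ℕ → ℝ} {m : ℕ} {R : ℝ}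

lemma sum_mul_pow_le_sum_mul_pow (hR : 1 ≤ R) (hb : ∀ j ∈ s, 0 ≤ b j) (hs : ∀ j ∈ s, j ≤ m) :
    ∑ j ∈ s, b j * R ^ j ≤ (∑ j ∈ s, b j) * R ^ m := by
  rw [sum_mul]
  exact sum_le_sum fun j hj => mul_le_mul_of_nonneg_left (pow_le_pow_right₀ hR (hs j hj)) (hb j hj)

lemma sum_mul_pow_lt_sum_mul_pow (hR : 1 < R) (hb : ∀ j ∈ s, 0 ≤ b j) (hs : ∀ j ∈ s, j ≤ m)
    {j₀ : ℕ} (hj₀ : j₀ ∈ s) (hj₀m : j₀ < m) (hbj₀ : 0 < b j₀) :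
    ∑ j ∈ s, b j * R ^ j < (∑ j ∈ s, b j) * R ^ m := by
  rw [sum_mul]
  refine sum_lt_sum (fun j hj => ?_) ⟨j₀, hj₀, ?_⟩
  · exact mul_le_mul_of_nonneg_left (pow_le_pow_right₀ hR.le (hs j hj)) (hb j hj)
  · exact mul_lt_mul_of_pos_left (pow_lt_pow_right₀ hR hj₀m) hbj₀

lemma mul_le_sum_of_mul_pow_succ_eq {c : ℝ} (hR : 1 < R) (hb : ∀ j ∈ s, 0 ≤ b j)
    (hs : ∀ j ∈ s, j ≤ m) (hroot : c * R ^ (m + 1) = ∑ j ∈ s, b j * R ^ j) :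
    c * R ≤ ∑ j ∈ s, b j := by
  refine le_of_mul_le_mul_right ?_ (pow_pos (zero_lt_one.trans hR) m)
  calc c * R * R ^ m = ∑ j ∈ s, b j * R ^ j := by rw [← hroot]; ring
    _ ≤ (∑ j ∈ s, b j) * R ^ m := sum_mul_pow_le_sum_mul_pow hR.le hb hs

lemma mul_lt_sum_of_mul_pow_succ_eq {c : ℝ} (hR : 1 < R) (hb : ∀ j ∈ s, 0 ≤ b j)
    (hs : ∀ j ∈ s, j ≤ m) (hroot : c * R ^ (m + 1) = ∑ j ∈ s, b j * R ^ j)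
    {j₀ : ℕ} (hj₀ : j₀ ∈ s) (hj₀m : j₀ < m) (hbj₀ : 0 < b j₀) :
    c * R < ∑ j ∈ s, b j := by
  refine lt_of_mul_lt_mul_right ?_ (pow_pos (zero_lt_one.trans hR) m).le
  calc c * R * R ^ m = ∑ j ∈ s, b j * R ^ j := by rw [← hroot]; ring
    _ < (∑ j ∈ s, b j) * R ^ m := sum_mul_pow_lt_sum_mul_pow hR hb hs hj₀ hj₀m hbj₀

lemma le_max_one_div_mul_sum_of_mul_pow_succ_eq {c : ℝ} (hc : 0 < c) (hb : ∀ j ∈ s, 0 ≤ b j)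
    (hs : ∀ j ∈ s, j ≤ m) (hroot : c * R ^ (m + 1) = ∑ j ∈ s, b j * R ^ j) :
    R ≤ max 1 ((1 / c) * ∑ j ∈ s, b j) := by
  rcases le_or_gt R 1 with hR | hR
  · exact le_max_of_le_left hR
  · refine le_max_of_le_right ?_
    rw [one_div, inv_mul_eq_div, le_div_iff₀ hc, mul_comm]
    exact mul_le_sum_of_mul_pow_succ_eq hR hb hs hroot

lemma lt_max_one_div_mul_sum_of_mul_pow_succ_eq {c : ℝ} (hc : 0 < c) (hb : ∀ j ∈ s, 0 ≤ b j)
    (hs : ∀ j ∈ s, j ≤ m) (hroot : c * R ^ (m + 1) = ∑ j ∈ s, b j * R ^ j)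
    {j₀ : ℕ} (hj₀ : j₀ ∈ s) (hj₀m : j₀ < m) (hbj₀ : 0 < b j₀) (hR1 : R ≠ 1) :
    R < max 1 ((1 / c) * ∑ j ∈ s, b j) := by
  rcases hR1.lt_or_gt with hR | hR
  · exact lt_max_of_lt_left hR
  · refine lt_max_of_lt_right ?_
    rw [one_div, inv_mul_eq_div, lt_div_iff₀ hc, mul_comm]
    exact mul_lt_sum_of_mul_pow_succ_eq hR hb hs hroot hj₀ hj₀m hbj₀

end CauchyBound

lemma sum_filter_pos_lt_eq_sum_Icc_sum_fiberwise {ι M : Type*} [AddCommMonoid M]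
    (s : Finset ι) (deg : ι → ℕ) (g : ι → M) (d : ℕ) :
    ∑ i ∈ s.filter (fun i => 0 < deg i ∧ deg i < d), g i
      = ∑ j ∈ Icc 1 (d - 1), ∑ i ∈ s.filter (fun i => deg i = j), g i := by
  rw [sum_fiberwise_eq_sum_filter]
  congr 1
  exact filter_congr fun i _ => by rw [mem_Icc]; omega

theorem new_bound_le_literature_bound_general
    {n : ℕ} (f : MvPolynomial (Fin n) ℝ) (d : ℕ)
    (hd0 : 0 < d)
    (cd : ℝ) (hcd : 0 < cd)
    (c : ℕ → ℝ)
    (hc : ∀ j, c j =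
      -(∑ α ∈ f.support.filter (fun α => (α.sum fun _ e => e) = j), |f.coeff α|))
    (R : ℝ)
    (hq : cd * R ^ d + ∑ j ∈ Finset.Icc 1 (d - 1), c j * R ^ j = 0)
    (Rlit : ℝ)
    (hRlit : Rlit = max 1 ((1 / cd) *
      ∑ α ∈ f.support.filter
        (fun α => 0 < (α.sum fun _ e => e) ∧ (α.sum fun _ e => e) < d),
        |f.coeff α|)) :
    R ≤ Rlit ∧
    ((2 < d ∧ (∃ α ∈ f.support, 0 < (α.sum fun _ e => e) ∧
        (α.sum fun _ e => e) < d - 1) ∧ R ≠ 1) → R < Rlit) := by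
  set deg : (Fin n →₀ ℕ) → ℕ := fun α => α.sum fun _ e => e
  set b : ℕ → ℝ := fun j => ∑ α ∈ f.support.filter (fun α => deg α = j), |f.coeff α|
  have hb : ∀ j ∈ Icc 1 (d - 1), 0 ≤ b j := fun j _ => sum_nonneg fun _ _ => abs_nonneg _
  have hs : ∀ j ∈ Icc 1 (d - 1), j ≤ d - 1 := fun j hj => (mem_Icc.mp hj).2
  have hroot : cd * R ^ (d - 1 + 1) = ∑ j ∈ Icc 1 (d - 1), b j * R ^ j := by
    simp only [hc, neg_mul, sum_neg_distrib] at hq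
    rw [Nat.sub_add_cancel hd0]
    linarith
  rw [hRlit, sum_filter_pos_lt_eq_sum_Icc_sum_fiberwise]
  refine ⟨le_max_one_div_mul_sum_of_mul_pow_succ_eq hcd hb hs hroot, ?_⟩
  rintro ⟨-, ⟨α, hα, hα0, hαd⟩, hR1⟩
  have hbα : 0 < b (deg α) := (abs_pos.mpr (mem_support_iff.mp hα)).trans_le
    (single_le_sum (fun β _ => abs_nonneg (f.coeff β)) (mem_filter.mpr ⟨hα, rfl⟩))
  exact lt_max_one_div_mul_sum_of_mul_pow_succ_eq hcd hb hs hroot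
    (mem_Icc.mpr ⟨hα0, by omega⟩) hαd hbα hR1

theorem new_bound_le_literature_bound
    {n : ℕ} (f : MvPolynomial (Fin n) ℝ) (d : ℕ)
    (hd : d = f.totalDegree) (hd0 : 0 < d)
    (cd : ℝ) (hcd : 0 < cd)
    (hcdbound : ∀ x : Fin n → ℝ, (∑ i, (x i) ^ 2) = 1 →
      cd ≤ eval x (homogeneousComponent d f))
    (c : ℕ → ℝ)
    (hc : ∀ j, c j =
      -(∑ α ∈ f.support.filter (fun α => (α.sum fun _ e => e) = j), |f.coeff α|))
    (R : ℝ) (hR0 : 0 ≤ R)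
    (hq : cd * R ^ d + ∑ j ∈ Finset.Icc 1 (d - 1), c j * R ^ j = 0)
    (hqmax : ∀ t : ℝ, 0 ≤ t →
      (cd * t ^ d + ∑ j ∈ Finset.Icc 1 (d - 1), c j * t ^ j = 0) → t ≤ R)
    (Rlit : ℝ)
    (hRlit : Rlit = max 1 ((1 / cd) *
      ∑ α ∈ f.support.filter
        (fun α => 0 < (α.sum fun _ e => e) ∧ (α.sum fun _ e => e) < d),
        |f.coeff α|)) :
    R ≤ Rlit ∧
    ((2 < d ∧ (∃ α ∈ f.support, 0 < (α.sum fun _ e => e) ∧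
        (α.sum fun _ e => e) < d - 1) ∧ R ≠ 1) → R < Rlit) :=
  new_bound_le_literature_bound_general f d hd0 cd hcd c hc R hq Rlit hRlit
end

section
/- Let h ∈ ℝ^n and let g ∈ cone(h), i.e. g = Σ_{α ∈ J} b_α · Π_{i=1}^n (X_i − h_i)^{2 α_i} with J ⊆ ℕ^n finite and b_α ≥ 0 for every α ≠ 0. Then h is a continuous minimizer of g and round(h) is an integer minimizer of g: g(h) ≤ g(x) for all x ∈ ℝ^n, and g(round(h)) ≤ g(x) for all x ∈ ℤ^n. -/
open MvPolynomial Finset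

/-- `g ∈ cone(h)`: a conic combination of monomials with even exponents
shifted by `h` (the constant coefficient `b 0` may be arbitrary). -/
def MemCone {n : ℕ} (h : Fin n → ℝ) (g : MvPolynomial (Fin n) ℝ) : Prop :=
  ∃ (J : Finset (Fin n → ℕ)) (b : (Fin n → ℕ) → ℝ),
    (∀ α ∈ J, α ≠ 0 → 0 ≤ b α) ∧
    g = ∑ α ∈ J, MvPolynomial.C (b α) *
      ∏ i, (MvPolynomial.X i - MvPolynomial.C (h i)) ^ (2 * α i)

/-! Apart from the constant, each summand is `b α ≥ 0` times a product of even powers of the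
distances `|x i - h i|`, so it only grows as `x` moves away from `h` coordinatewise. Hence any
coordinatewise closest point to `h` is a minimizer: `h` itself among real points, and `round h`
among integer points. -/

lemma pow_two_mul_le_pow_two_mul_of_abs_le {R : Type*} [Ring R] [LinearOrder R]
    [IsStrictOrderedRing R] {a b : R}
    (hab : |a| ≤ |b|) (k : ℕ) : a ^ (2 * k) ≤ b ^ (2 * k) := by
  rw [pow_mul, pow_mul]
  exact pow_le_pow_left₀ (sq_nonneg a) (sq_le_sq.mpr hab) k

lemma eval_sum_C_mul_prod_X_sub_C_pow {n : ℕ} (h : Fin n → ℝ) (J : Finset (Fin n → ℕ))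
    (b : (Fin n → ℕ) → ℝ) (x : Fin n → ℝ) :
    eval x (∑ α ∈ J, C (b α) * ∏ i, (X i - C (h i)) ^ (2 * α i))
      = ∑ α ∈ J, b α * ∏ i, (x i - h i) ^ (2 * α i) := by
  simp

theorem MemCone.eval_le_eval_of_abs_sub_le {n : ℕ} {h : Fin n → ℝ}
    {g : MvPolynomial (Fin n) ℝ} (hg : MemCone h g) {x y : Fin n → ℝ}
    (hxy : ∀ i, |x i - h i| ≤ |y i - h i|) : eval x g ≤ eval y g := by
  obtain ⟨J, b, hb, rfl⟩ := hg
  rw [eval_sum_C_mul_prod_X_sub_C_pow, eval_sum_C_mul_prod_X_sub_C_pow]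
  refine sum_le_sum fun α hα => ?_
  rcases eq_or_ne α 0 with rfl | hα0
  · simp
  refine mul_le_mul_of_nonneg_left (prod_le_prod (fun i _ => ?_) fun i _ => ?_) (hb α hα hα0)
  · exact (even_two_mul _).pow_nonneg _
  · exact pow_two_mul_le_pow_two_mul_of_abs_le (hxy i) (α i)

theorem cone_minimizers
    {n : ℕ} (h : Fin n → ℝ) (g : MvPolynomial (Fin n) ℝ)
    (hg : MemCone h g) :
    (∀ x : Fin n → ℝ, eval h g ≤ eval x g) ∧
    (∀ x : Fin n → ℤ,
      eval (fun i => (round (h i) : ℝ)) g ≤ eval (fun i => (x i : ℝ)) g) := by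
  refine ⟨fun x => hg.eval_le_eval_of_abs_sub_le fun i => ?_,
    fun x => hg.eval_le_eval_of_abs_sub_le fun i => ?_⟩
  · simp
  · rw [abs_sub_comm, abs_sub_comm (x i : ℝ)]
    exact round_le (h i) (x i)
end

section
/- Let f be a multivariate real polynomial in n variables, let h ∈ ℝ^n, and let g ∈ cone(h) satisfy g(x) ≤ f(x) for all x ∈ ℝ^n. Then g(round(h)) ≤ f(x) for every x ∈ ℤ^n; in particular g(round(h)) is a lower bound on the integer minimum inf_{x ∈ ℤ^n} f(x). -/
open MvPolynomial Finset

/-! Every `g ∈ cone(h)` is, up to its constant term, a nonnegative combination of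
products of even powers of `xᵢ - hᵢ`, hence a nondecreasing function of the distances
`|xᵢ - hᵢ|`. Since `round hᵢ` is an integer nearest to `hᵢ`, the point `round h`
minimises `g` over `ℤⁿ`, so `g (round h) ≤ g x ≤ f x` for every integer point `x`. -/

theorem prod_sub_pow_two_mul_le {ι R : Type*} [Fintype ι] [CommRing R] [LinearOrder R]
    [IsStrictOrderedRing R] (α : ι → ℕ) {h x y : ι → R}
    (hxy : ∀ i, |x i - h i| ≤ |y i - h i|) :
    ∏ i, (x i - h i) ^ (2 * α i) ≤ ∏ i, (y i - h i) ^ (2 * α i) := by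
  refine prod_le_prod (fun i _ => (even_two_mul _).pow_nonneg _) fun i _ => ?_
  rw [← (even_two_mul (α i)).pow_abs (x i - h i), ← (even_two_mul (α i)).pow_abs (y i - h i)]
  exact pow_le_pow_left₀ (abs_nonneg _) (hxy i) _

namespace MemCone

variable {n : ℕ} {h : Fin n → ℝ} {g : MvPolynomial (Fin n) ℝ}

theorem eval_le_eval_of_abs_sub_le_s14 (hg : MemCone h g) {x y : Fin n → ℝ}
    (hxy : ∀ i, |x i - h i| ≤ |y i - h i|) : eval x g ≤ eval y g := by
  obtain ⟨J, b, hb, rfl⟩ := hg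
  simp only [map_sum, map_mul, eval_C, map_prod, map_pow, map_sub, eval_X]
  refine sum_le_sum fun α hα => ?_
  rcases eq_or_ne α 0 with rfl | hα0
  · simp
  · exact mul_le_mul_of_nonneg_left (prod_sub_pow_two_mul_le α hxy) (hb α hα hα0)

theorem eval_round_le (hg : MemCone h g) (x : Fin n → ℤ) :
    eval (fun i => (round (h i) : ℝ)) g ≤ eval (fun i => (x i : ℝ)) g :=
  hg.eval_le_eval_of_abs_sub_le_s14 fun i => by
    simpa only [abs_sub_comm] using round_le (h i) (x i)

end MemCone

theorem cone_underestimator_gives_lower_bound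
    {n : ℕ} (f g : MvPolynomial (Fin n) ℝ) (h : Fin n → ℝ)
    (hg : MemCone h g) (hle : ∀ x : Fin n → ℝ, eval x g ≤ eval x f) :
    ∀ x : Fin n → ℤ,
      eval (fun i => (round (h i) : ℝ)) g ≤ eval (fun i => (x i : ℝ)) f :=
  fun x => (hg.eval_round_le x).trans (hle _)
end

section
/- Let f be a multivariate real polynomial in n variables, let h ∈ ℝ^n, and let g ∈ cone(h). Suppose there exist q ∈ ℤ^n and z ∈ ℝ with f(q) ≤ z, and g(x) ≤ f(x) for every x ∈ ℝ^n belonging to the sublevel set {x ∈ ℝ^n : f(x) ≤ z}. Then g(round(h)) ≤ f(x) for every x ∈ ℤ^n. In particular, this holds whenever there is a sum-of-squares polynomial σ such that f − g − σ·(z − f) is a sum of squares: then g(round(h)) ≤ inf_{x ∈ ℤ^n} f(x). -/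
/-!
A polynomial in `cone(h)` is a nonnegative combination of even powers of the `|X_i - h_i|`
(up to its constant term), so it grows coordinatewise away from `h`; among integer points it is
therefore smallest at `round(h)`. For an integer `x` in the sublevel set `{f ≤ z}` this gives
`g(round h) ≤ g(x) ≤ f(x)`; outside it, `g(round h) ≤ g(q) ≤ f(q) ≤ z < f(x)`.
A Positivstellensatz-type certificate `f - g = sos + σ (z - f)` forces `g ≤ f` on `{f ≤ z}`.
-/

open MvPolynomial Finset

/-- A polynomial is a sum of squares. -/
def IsSos {n : ℕ} (p : MvPolynomial (Fin n) ℝ) : Prop :=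
  ∃ (k : ℕ) (u : Fin k → MvPolynomial (Fin n) ℝ), p = ∑ i, (u i) ^ 2

theorem IsSos.eval_nonneg {n : ℕ} {p : MvPolynomial (Fin n) ℝ} (hp : IsSos p)
    (v : Fin n → ℝ) : 0 ≤ eval v p := by
  obtain ⟨k, u, rfl⟩ := hp
  simp only [map_sum, map_pow]
  exact Finset.sum_nonneg fun i _ => sq_nonneg _

theorem IsSos.eval_le_of_certificate {n : ℕ} {f g σ : MvPolynomial (Fin n) ℝ} {z : ℝ}
    (hσ : IsSos σ) (hcert : IsSos (f - g - σ * (C z - f))) {x : Fin n → ℝ}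
    (hx : eval x f ≤ z) : eval x g ≤ eval x f := by
  have hrest := hcert.eval_nonneg x
  simp only [map_sub, map_mul, eval_C] at hrest
  nlinarith [mul_nonneg (hσ.eval_nonneg x) (sub_nonneg.mpr hx)]

theorem MemCone.eval_le_eval {n : ℕ} {h : Fin n → ℝ} {g : MvPolynomial (Fin n) ℝ}
    (hg : MemCone h g) {x y : Fin n → ℝ} (hxy : ∀ i, |y i - h i| ≤ |x i - h i|) :
    eval y g ≤ eval x g := by
  obtain ⟨J, b, hb, rfl⟩ := hg
  simp only [map_sum, map_mul, map_prod, map_pow, eval_C, map_sub, eval_X]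
  refine Finset.sum_le_sum fun α hα => ?_
  rcases eq_or_ne α 0 with rfl | hα0
  · simp
  refine mul_le_mul_of_nonneg_left (Finset.prod_le_prod (fun i _ => ?_) fun i _ => ?_)
    (hb α hα hα0)
  · exact (even_two_mul _).pow_nonneg _
  · rw [← (even_two_mul (α i)).pow_abs, ← (even_two_mul (α i)).pow_abs (x i - h i)]
    exact pow_le_pow_left₀ (abs_nonneg _) (hxy i) _

theorem MemCone.eval_round_le_s15 {n : ℕ} {h : Fin n → ℝ} {g : MvPolynomial (Fin n) ℝ}
    (hg : MemCone h g) (x : Fin n → ℤ) :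
    eval (fun i => (round (h i) : ℝ)) g ≤ eval (fun i => (x i : ℝ)) g :=
  hg.eval_le_eval fun i => by
    rw [abs_sub_comm, abs_sub_comm (x i : ℝ)]
    exact round_le (h i) (x i)

theorem MemCone.eval_round_le_of_le_on_sublevel {n : ℕ} {f g : MvPolynomial (Fin n) ℝ}
    {h : Fin n → ℝ} (hg : MemCone h g) {q : Fin n → ℤ} {z : ℝ}
    (hq : eval (fun i => (q i : ℝ)) f ≤ z)
    (hsub : ∀ x : Fin n → ℝ, eval x f ≤ z → eval x g ≤ eval x f) (x : Fin n → ℤ) :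
    eval (fun i => (round (h i) : ℝ)) g ≤ eval (fun i => (x i : ℝ)) f := by
  by_cases hx : eval (fun i => (x i : ℝ)) f ≤ z
  · exact (hg.eval_round_le_s15 x).trans (hsub _ hx)
  · calc eval (fun i => (round (h i) : ℝ)) g
        ≤ eval (fun i => (q i : ℝ)) g := hg.eval_round_le_s15 q
      _ ≤ eval (fun i => (q i : ℝ)) f := hsub _ hq
      _ ≤ z := hq
      _ ≤ eval (fun i => (x i : ℝ)) f := le_of_not_ge hx

theorem sublevel_underestimator_gives_lower_bound
    {n : ℕ} (f g : MvPolynomial (Fin n) ℝ) (h : Fin n → ℝ)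
    (hg : MemCone h g) (q : Fin n → ℤ) (z : ℝ)
    (hq : eval (fun i => (q i : ℝ)) f ≤ z) :
    ((∀ x : Fin n → ℝ, eval x f ≤ z → eval x g ≤ eval x f) →
      ∀ x : Fin n → ℤ,
        eval (fun i => (round (h i) : ℝ)) g ≤ eval (fun i => (x i : ℝ)) f) ∧
    (∀ σ : MvPolynomial (Fin n) ℝ, IsSos σ →
      IsSos (f - g - σ * (MvPolynomial.C z - f)) →
      ∀ x : Fin n → ℤ,
        eval (fun i => (round (h i) : ℝ)) g ≤ eval (fun i => (x i : ℝ)) f) :=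
  ⟨hg.eval_round_le_of_le_on_sublevel hq, fun _ hσ hcert =>
    hg.eval_round_le_of_le_on_sublevel hq fun _ => hσ.eval_le_of_certificate hcert⟩
end

section
/- Let f be a multivariate real polynomial in n variables with deg f > 0, let h ∈ ℝ^n, and let g ∈ cone(h) with deg g > 0. Let z ∈ ℝ and let σ be a sum-of-squares polynomial such that f − g − σ·(z − f) is a sum of squares. Then deg g ≤ deg f + max{deg σ, 0} (equivalently, in the convention where the zero polynomial has total degree 0, deg g ≤ deg f + deg σ). -/
open MvPolynomial Finset

/-! Restrict everything to the diagonal `t ↦ (t, …, t)`. There each shifted even monomial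
`∏ (X_i - h_i)^(2 α_i)` becomes a monic polynomial of degree `2|α|`, so the restriction of a
nonconstant `g ∈ cone(h)` has degree `deg g` with positive leading coefficient, the coefficients
`b_α` of top degree being nonnegative and not all zero. If `deg g > deg f + deg σ`, then `g` alone
contributes to degree `deg g` of `f - g - σ (z - f)`, whose diagonal restriction would then tend
to `-∞`, contradicting that it is a sum of squares. -/

theorem Polynomial.coeff_sum_C_mul_monic {ι R : Type*} [CommSemiring R] (s : Finset ι)
    (c : ι → R) (p : ι → Polynomial R) (hp : ∀ i ∈ s, (p i).Monic) {D : ℕ}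
    (hD : ∀ i ∈ s, (p i).natDegree ≤ D) :
    (∑ i ∈ s, Polynomial.C (c i) * p i).coeff D = ∑ i ∈ s with (p i).natDegree = D, c i := by
  rw [Polynomial.finsetSum_coeff, sum_filter]
  refine sum_congr rfl fun i hi => ?_
  rw [Polynomial.coeff_C_mul]
  split_ifs with hi'
  · rw [← hi', (hp i hi).coeff_natDegree, mul_one]
  · rw [Polynomial.coeff_eq_zero_of_natDegree_lt ((hD i hi).lt_of_ne hi'), mul_zero]

theorem Polynomial.coeff_nonneg_of_forall_eval_nonneg {𝕜 : Type*} [NormedField 𝕜] [LinearOrder 𝕜]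
    [IsStrictOrderedRing 𝕜] [OrderTopology 𝕜] {p : Polynomial 𝕜} (hp : ∀ t, 0 ≤ p.eval t)
    {D : ℕ} (hD : p.natDegree ≤ D) : 0 ≤ p.coeff D := by
  rcases hD.lt_or_eq with hlt | rfl
  · rw [Polynomial.coeff_eq_zero_of_natDegree_lt hlt]
  rcases Nat.eq_zero_or_pos p.natDegree with h0 | hpos
  · rw [h0, Polynomial.coeff_zero_eq_eval_zero]
    exact hp 0
  by_contra! hneg
  have hbot := p.tendsto_atBot_of_leadingCoeff_nonpos
    (Polynomial.natDegree_pos_iff_degree_pos.mp hpos) hneg.le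
  obtain ⟨t, ht⟩ := (hbot.eventually (Filter.eventually_lt_atBot 0)).exists
  exact (hp t).not_gt ht

namespace MvPolynomial

section DiagonalRestriction

variable {σ R : Type*} [CommSemiring R]

noncomputable def diagonalRestriction : MvPolynomial σ R →ₐ[R] Polynomial R :=
  aeval fun _ => Polynomial.X

theorem natDegree_diagonalRestriction_le (p : MvPolynomial σ R) :
    (diagonalRestriction p).natDegree ≤ p.totalDegree := by
  conv_lhs => rw [p.as_sum, map_sum]
  refine Polynomial.natDegree_sum_le_of_forall_le _ _ fun m hm => ?_
  rw [diagonalRestriction, aeval_monomial, ← Polynomial.C_eq_algebraMap, Finsupp.prod]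
  refine Polynomial.natDegree_C_mul_le _ _ |>.trans <| Polynomial.natDegree_prod_le _ _ |>.trans ?_
  exact (sum_le_sum fun i _ => Polynomial.natDegree_X_pow_le _).trans (le_totalDegree hm)

theorem diagonalRestriction_C (r : R) :
    diagonalRestriction (C r : MvPolynomial σ R) = Polynomial.C r :=
  aeval_C _ _

theorem coeff_diagonalRestriction_of_totalDegree_lt {p : MvPolynomial σ R} {D : ℕ}
    (hp : p.totalDegree < D) : (diagonalRestriction p).coeff D = 0 :=
  Polynomial.coeff_eq_zero_of_natDegree_lt <| (natDegree_diagonalRestriction_le p).trans_lt hp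

end DiagonalRestriction

section ShiftedEvenMonomial

variable {ι R : Type*} [Fintype ι] [CommRing R]

noncomputable def shiftedEvenMonomial (h : ι → R) (α : ι → ℕ) : MvPolynomial ι R :=
  ∏ i, (X i - C (h i)) ^ (2 * α i)

theorem totalDegree_shiftedEvenMonomial_le [Nontrivial R] (h : ι → R) (α : ι → ℕ) :
    (shiftedEvenMonomial h α).totalDegree ≤ ∑ i, 2 * α i := by
  refine (totalDegree_finsetProd _ _).trans <| sum_le_sum fun i _ => ?_
  refine (totalDegree_pow _ _).trans ?_
  have : (X i - C (h i) : MvPolynomial ι R).totalDegree ≤ 1 :=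
    (totalDegree_sub_C_le _ _).trans (totalDegree_X i).le
  simpa using Nat.mul_le_mul_left (2 * α i) this

theorem diagonalRestriction_shiftedEvenMonomial (h : ι → R) (α : ι → ℕ) :
    diagonalRestriction (shiftedEvenMonomial h α) =
      ∏ i, (Polynomial.X - Polynomial.C (h i)) ^ (2 * α i) := by
  simp only [shiftedEvenMonomial, diagonalRestriction, map_prod, map_pow, map_sub, aeval_X,
    aeval_C, Polynomial.algebraMap_eq]

theorem monic_diagonalRestriction_shiftedEvenMonomial (h : ι → R) (α : ι → ℕ) :
    (diagonalRestriction (shiftedEvenMonomial h α)).Monic := by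
  rw [diagonalRestriction_shiftedEvenMonomial]
  exact Polynomial.monic_prod_of_monic _ _ fun i _ => (Polynomial.monic_X_sub_C (h i)).pow _

theorem natDegree_diagonalRestriction_shiftedEvenMonomial [Nontrivial R] (h : ι → R)
    (α : ι → ℕ) : (diagonalRestriction (shiftedEvenMonomial h α)).natDegree = ∑ i, 2 * α i := by
  rw [diagonalRestriction_shiftedEvenMonomial, Polynomial.natDegree_prod_of_monic _ _
    fun i _ => (Polynomial.monic_X_sub_C (h i)).pow _]
  refine sum_congr rfl fun i _ => ?_
  rw [(Polynomial.monic_X_sub_C (h i)).natDegree_pow, Polynomial.natDegree_X_sub_C, mul_one]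

theorem totalDegree_sum_C_mul_shiftedEvenMonomial_le [Nontrivial R] (J : Finset (ι → ℕ))
    (b : (ι → ℕ) → R) (h : ι → R) :
    (∑ α ∈ J, C (b α) * shiftedEvenMonomial h α).totalDegree ≤ J.sup fun α => ∑ i, 2 * α i := by
  refine (totalDegree_finsetSum _ _).trans <| sup_mono_fun fun α _ => ?_
  exact (totalDegree_mul _ _).trans <| by simpa using totalDegree_shiftedEvenMonomial_le h α

theorem coeff_diagonalRestriction_sum_C_mul_shiftedEvenMonomial [Nontrivial R]
    (J : Finset (ι → ℕ)) (b : (ι → ℕ) → R) (h : ι → R) :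
    (diagonalRestriction (∑ α ∈ J, C (b α) * shiftedEvenMonomial h α)).coeff
        (J.sup fun α => ∑ i, 2 * α i) =
      ∑ α ∈ J with ∑ i, 2 * α i = J.sup fun α => ∑ i, 2 * α i, b α := by
  simp only [map_sum, map_mul, diagonalRestriction_C]
  rw [Polynomial.coeff_sum_C_mul_monic _ _ _
    (fun α _ => monic_diagonalRestriction_shiftedEvenMonomial h α)
    (fun α hα => (natDegree_diagonalRestriction_shiftedEvenMonomial h α).trans_le
      (le_sup (f := fun α => ∑ i, 2 * α i) hα))]
  simp only [natDegree_diagonalRestriction_shiftedEvenMonomial]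

end ShiftedEvenMonomial

end MvPolynomial

theorem IsSos.eval_diagonalRestriction_nonneg {n : ℕ} {p : MvPolynomial (Fin n) ℝ} (hp : IsSos p)
    (t : ℝ) : 0 ≤ (diagonalRestriction p).eval t := by
  obtain ⟨k, u, rfl⟩ := hp
  simp only [map_sum, map_pow, Polynomial.eval_finsetSum, Polynomial.eval_pow]
  exact sum_nonneg fun i _ => sq_nonneg _

namespace MemCone

variable {n : ℕ} {h : Fin n → ℝ} {g : MvPolynomial (Fin n) ℝ}

theorem exists_coeff_ne_zero (hg : MemCone h g) :
    ∃ (J : Finset (Fin n → ℕ)) (b : (Fin n → ℕ) → ℝ), (∀ α ∈ J, b α ≠ 0) ∧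
      (∀ α ∈ J, α ≠ 0 → 0 ≤ b α) ∧ g = ∑ α ∈ J, C (b α) * shiftedEvenMonomial h α := by
  classical
  obtain ⟨J, b, hb, rfl⟩ := hg
  refine ⟨J.filter (b · ≠ 0), b, fun α hα => (mem_filter.mp hα).2,
    fun α hα => hb α (mem_filter.mp hα).1, ?_⟩
  exact (sum_filter_of_ne (p := fun α => b α ≠ 0) fun α _ hne hb0 =>
    hne (by rw [hb0, map_zero, zero_mul])).symm

theorem coeff_diagonalRestriction_totalDegree_pos (hg : MemCone h g) (hdeg : 0 < g.totalDegree) :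
    0 < (diagonalRestriction g).coeff g.totalDegree := by
  obtain ⟨J, b, hb0, hb, rfl⟩ := hg.exists_coeff_ne_zero
  set D := J.sup fun α => ∑ i, 2 * α i
  have hgD := totalDegree_sum_C_mul_shiftedEvenMonomial_le J b h
  have hDpos : 0 < D := hdeg.trans_le hgD
  have hpos : 0 < (diagonalRestriction (∑ α ∈ J, C (b α) * shiftedEvenMonomial h α)).coeff D := by
    rw [coeff_diagonalRestriction_sum_C_mul_shiftedEvenMonomial]
    have hJ : J.Nonempty := nonempty_iff_ne_empty.mpr fun hJ => by simp [D, hJ] at hDpos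
    obtain ⟨α₀, hα₀, hα₀D⟩ := exists_mem_eq_sup J hJ fun α => ∑ i, 2 * α i
    refine sum_pos (fun α hα => ?_) ⟨α₀, mem_filter.mpr ⟨hα₀, hα₀D.symm⟩⟩
    obtain ⟨hαJ, hαD⟩ := mem_filter.mp hα
    have hα0 : α ≠ 0 := by
      rintro rfl
      simp only [Pi.zero_apply, mul_zero, sum_const_zero] at hαD
      omega
    exact (hb α hαJ hα0).lt_of_ne' (hb0 α hαJ)
  have hDeq : D = _ := le_antisymm
    ((Polynomial.le_natDegree_of_ne_zero hpos.ne').trans (natDegree_diagonalRestriction_le _)) hgD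
  rwa [← hDeq]

end MemCone

theorem degree_bound_for_sublevel_underestimators_general
    {n : ℕ} (f g σ : MvPolynomial (Fin n) ℝ) (h : Fin n → ℝ) (z : ℝ)
    (hgc : MemCone h g) (hgd : 0 < g.totalDegree)
    (hsos : IsSos (f - g - σ * (MvPolynomial.C z - f))) :
    g.totalDegree ≤ f.totalDegree + σ.totalDegree := by
  by_contra! hlt
  have hf : f.totalDegree < g.totalDegree := by omega
  have hσf : (σ * (C z - f)).totalDegree < g.totalDegree := by
    refine (totalDegree_mul _ _).trans_lt ?_
    have hzf := totalDegree_sub (C z) f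
    rw [totalDegree_C, Nat.zero_max] at hzf
    omega
  have hF : (f - g - σ * (C z - f)).totalDegree ≤ g.totalDegree :=
    (totalDegree_sub _ _).trans <| max_le ((totalDegree_sub _ _).trans (max_le hf.le le_rfl)) hσf.le
  have hcoeff : (diagonalRestriction (f - g - σ * (C z - f))).coeff g.totalDegree < 0 := by
    rw [map_sub, map_sub, Polynomial.coeff_sub, Polynomial.coeff_sub,
      coeff_diagonalRestriction_of_totalDegree_lt hf,
      coeff_diagonalRestriction_of_totalDegree_lt hσf]
    linarith [hgc.coeff_diagonalRestriction_totalDegree_pos hgd]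
  exact hcoeff.not_ge <| Polynomial.coeff_nonneg_of_forall_eval_nonneg
    hsos.eval_diagonalRestriction_nonneg <| (natDegree_diagonalRestriction_le _).trans hF

theorem degree_bound_for_sublevel_underestimators
    {n : ℕ} (f g σ : MvPolynomial (Fin n) ℝ) (h : Fin n → ℝ) (z : ℝ)
    (hf : 0 < f.totalDegree) (hgc : MemCone h g) (hgd : 0 < g.totalDegree)
    (hσ : IsSos σ) (hsos : IsSos (f - g - σ * (MvPolynomial.C z - f))) :
    g.totalDegree ≤ f.totalDegree + σ.totalDegree :=
  degree_bound_for_sublevel_underestimators_general f g σ h z hgc hgd hsos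
end

section
/- Let α ∈ ℕ^n with α ≠ 0, let |α| = α_1 + … + α_n, and let p ≥ 1 be a real number. Define x̂ ∈ ℝ^n by x̂_i = (α_i / |α|)^{1/p} for i = 1, …, n. Then x̂ lies on the unit p-sphere (Σ_i |x̂_i|^p = 1) and the monomial x ↦ Π_{i=1}^n x_i^{α_i} attains its maximum over the unit p-sphere at x̂: for every x ∈ ℝ^n with Σ_{i=1}^n |x_i|^p = 1 one has Π_i x_i^{α_i} ≤ Π_i x̂_i^{α_i}. -/
/-!
Put `t_i = |x_i|^p` and `w_i = α_i / |α|`; on the sphere both are probability vectors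
(`∑ t_i = 1`, `∑ w_i = 1`), and `|x^α| = (∏ t_i ^ w_i) ^ (|α| / p)`. Weighted AM-GM applied to
the ratios `t_i / w_i` gives Gibbs' inequality `∏ t_i ^ w_i ≤ ∏ w_i ^ w_i`, and since
`|x̂_i|^p = w_i`, the right-hand side is the same product taken at `x̂`.
-/

open Finset

namespace Real

theorem prod_rpow_le_prod_rpow_self {ι : Type*} (s : Finset ι) {w t : ι → ℝ}
    (hw : ∀ i ∈ s, 0 ≤ w i) (hw1 : ∑ i ∈ s, w i = 1)
    (ht : ∀ i ∈ s, 0 ≤ t i) (ht1 : ∑ i ∈ s, t i ≤ 1) :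
    ∏ i ∈ s, t i ^ w i ≤ ∏ i ∈ s, w i ^ w i := by
  have hratio : ∏ i ∈ s, (t i / w i) ^ w i ≤ 1 :=
    calc ∏ i ∈ s, (t i / w i) ^ w i
        ≤ ∑ i ∈ s, w i * (t i / w i) :=
          geom_mean_le_arith_mean_weighted s w _ hw hw1 fun i hi => div_nonneg (ht i hi) (hw i hi)
      _ ≤ ∑ i ∈ s, t i := sum_le_sum fun i hi => by
          rcases eq_or_ne (w i) 0 with h | h
          · simpa [h] using ht i hi
          · rw [mul_div_cancel₀ _ h]
      _ ≤ 1 := ht1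
  have hsplit : ∏ i ∈ s, t i ^ w i = (∏ i ∈ s, (t i / w i) ^ w i) * ∏ i ∈ s, w i ^ w i := by
    rw [← prod_mul_distrib]
    refine prod_congr rfl fun i hi => ?_
    rcases eq_or_ne (w i) 0 with h | h
    · simp [h]
    · rw [← mul_rpow (div_nonneg (ht i hi) (hw i hi)) (hw i hi), div_mul_cancel₀ _ h]
  rw [hsplit]
  exact mul_le_of_le_one_left (prod_nonneg fun i hi => rpow_nonneg (hw i hi) _) hratio

theorem pow_eq_rpow_rpow_rpow {a : ℝ} (ha : 0 ≤ a) (k : ℕ) {p S : ℝ} (hp : p ≠ 0) (hS : S ≠ 0) :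
    a ^ k = ((a ^ p) ^ (k / S)) ^ (S / p) := by
  rw [← rpow_mul ha, ← rpow_mul ha, ← rpow_natCast]
  congr 1
  field_simp

theorem prod_abs_pow_eq_rpow {ι : Type*} (s : Finset ι) (x : ι → ℝ) (k : ι → ℕ) {p S : ℝ}
    (hp : p ≠ 0) (hS : S ≠ 0) :
    ∏ i ∈ s, |x i| ^ k i = (∏ i ∈ s, (|x i| ^ p) ^ (k i / S)) ^ (S / p) := by
  rw [← finsetProd_rpow _ _ fun i _ => rpow_nonneg (rpow_nonneg (abs_nonneg _) _) _]
  exact prod_congr rfl fun i _ => pow_eq_rpow_rpow_rpow (abs_nonneg _) _ hp hS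

end Real

theorem monomial_max_on_p_sphere
    {n : ℕ} (α : Fin n → ℕ) (hα : α ≠ 0) (p : ℝ) (hp : 1 ≤ p)
    (xhat : Fin n → ℝ)
    (hxhat : ∀ i, xhat i = ((α i : ℝ) / (∑ j, (α j : ℝ))) ^ (1 / p)) :
    (∑ i, |xhat i| ^ p) = 1 ∧
    (∀ x : Fin n → ℝ, (∑ i, |x i| ^ p) = 1 →
      (∏ i, (x i) ^ (α i)) ≤ ∏ i, (xhat i) ^ (α i)) := by
  have hp0 : 0 < p := one_pos.trans_le hp
  set S : ℝ := ∑ j, (α j : ℝ)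
  have hS : 0 < S := by
    obtain ⟨i, hi⟩ := Function.ne_iff.mp hα
    exact (Nat.cast_pos.mpr (Nat.pos_of_ne_zero hi)).trans_le
      (single_le_sum (fun j _ => Nat.cast_nonneg (α j)) (mem_univ i))
  have hw0 : ∀ i, 0 ≤ (α i : ℝ) / S := fun i => by positivity
  have hw1 : ∑ i, (α i : ℝ) / S = 1 := by rw [← sum_div, div_self hS.ne']
  have hxhat0 : ∀ i, 0 ≤ xhat i := fun i => hxhat i ▸ Real.rpow_nonneg (hw0 i) _
  have hxhatp : ∀ i, |xhat i| ^ p = (α i : ℝ) / S := fun i => by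
    rw [abs_of_nonneg (hxhat0 i), hxhat, one_div, Real.rpow_inv_rpow (hw0 i) hp0.ne']
  refine ⟨by simp only [hxhatp, hw1], fun x hx => ?_⟩
  calc ∏ i, x i ^ α i
      ≤ ∏ i, |x i| ^ α i := by
        simpa only [abs_prod, abs_pow] using le_abs_self (∏ i, x i ^ α i)
    _ = (∏ i, (|x i| ^ p) ^ ((α i : ℝ) / S)) ^ (S / p) :=
        Real.prod_abs_pow_eq_rpow _ x α hp0.ne' hS.ne'
    _ ≤ (∏ i, (|xhat i| ^ p) ^ ((α i : ℝ) / S)) ^ (S / p) := by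
        simp only [hxhatp]
        refine Real.rpow_le_rpow (prod_nonneg fun i _ => by positivity) ?_ (by positivity)
        exact Real.prod_rpow_le_prod_rpow_self _ (fun i _ => hw0 i) hw1
          (fun i _ => by positivity) hx.le
    _ = ∏ i, |xhat i| ^ α i := (Real.prod_abs_pow_eq_rpow _ xhat α hp0.ne' hS.ne').symm
    _ = ∏ i, xhat i ^ α i := by simp only [abs_of_nonneg (hxhat0 _)]
end
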